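/- Let L be a real symmetric positive semidefinite N×N matrix, σ > 0, e ∈ ℝ^N, X an N×M real matrix with M ≥ 1, and set Θ(t) := L + t e eᵀ + σ⁻² I. Then Θ(0) is invertible, and the function F(t) := log det Θ(t) − (1/M)·Tr(Xᵀ Θ(t) X) has derivative at t = 0 equal to eᵀ Θ(0)⁻¹ e − (1/M)·‖Xᵀ e‖₂², i.e. HasDerivAt F (eᵀ Θ(0)⁻¹ e − (1/M)‖Xᵀe‖₂²) 0. -/

import Mathlib

/-!
`Θ(t)` is a rank-one perturbation of `Θ(0)`, which is positive definite, so the matrix determinant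
lemma gives `det Θ(t) = det Θ(0) · (1 + t · eᵀ Θ(0)⁻¹ e)` and the log-determinant has slope
`eᵀ Θ(0)⁻¹ e` at `0`. The trace term is affine in `t` with slope
`Tr(Xᵀ e eᵀ X) = ‖Xᵀ e‖₂²`.
-/

open Matrix

namespace Matrix

variable {n : Type*} [Fintype n]

theorem det_add_smul_vecMulVec [DecidableEq n] {R : Type*} [CommRing R] {A : Matrix n n R}
    (hA : IsUnit A.det) (t : R) (u v : n → R) :
    (A + t • vecMulVec u v).det = A.det * (1 + t * (v ⬝ᵥ A⁻¹ *ᵥ u)) := by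
  rw [← smul_vecMulVec, vecMulVec_eq Unit, det_add_replicateCol_mul_replicateRow hA,
    Matrix.mul_assoc, ← replicateCol_mulVec, replicateRow_mul_replicateCol, det_unique (n := Unit),
    mulVec_smul, dotProduct_smul, smul_eq_mul]
  rfl

theorem trace_mul_vecMulVec_mul {R : Type*} [CommSemiring R] {m : Type*} [Fintype m]
    (B : Matrix m n R) (C : Matrix n m R) (u v : n → R) :
    trace (B * vecMulVec u v * C) = (B *ᵥ u) ⬝ᵥ (v ᵥ* C) := by
  rw [mul_vecMulVec, vecMulVec_mul, trace_vecMulVec]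

theorem hasDerivAt_log_det_add_smul_vecMulVec [DecidableEq n] {A : Matrix n n ℝ} (hA : A.det ≠ 0)
    (u v : n → ℝ) :
    HasDerivAt (fun t : ℝ => Real.log (A + t • vecMulVec u v).det) (v ⬝ᵥ A⁻¹ *ᵥ u) 0 := by
  simp_rw [det_add_smul_vecMulVec hA.isUnit]
  have hlin : HasDerivAt (fun t : ℝ => A.det * (1 + t * (v ⬝ᵥ A⁻¹ *ᵥ u)))
      (A.det * (v ⬝ᵥ A⁻¹ *ᵥ u)) 0 :=
    ((hasDerivAt_mul_const _).const_add 1).const_mul _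
  convert hlin.log (by simpa using hA) using 1
  field_simp
  simp

theorem hasDerivAt_trace_mul_add_smul_mul {𝕜 : Type*} [NontriviallyNormedField 𝕜] {m : Type*}
    [Fintype m] (B : Matrix m n 𝕜) (A P : Matrix n n 𝕜) (C : Matrix n m 𝕜) (x : 𝕜) :
    HasDerivAt (fun t : 𝕜 => trace (B * (A + t • P) * C)) (trace (B * P * C)) x := by
  simp_rw [Matrix.mul_add, Matrix.add_mul, trace_add, Matrix.mul_smul, Matrix.smul_mul, trace_smul,
    smul_eq_mul]
  exact (hasDerivAt_mul_const _).const_add _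

end Matrix

theorem edge_sensitivity_hasDerivAt_general {N M : ℕ}
    (L : Matrix (Fin N) (Fin N) ℝ) (hL : L.IsSymm)
    (hpsd : ∀ x : Fin N → ℝ, 0 ≤ x ⬝ᵥ L.mulVec x)
    (σ : ℝ) (hσ : 0 < σ) (e : Fin N → ℝ) (X : Matrix (Fin N) (Fin M) ℝ) :
    IsUnit (L + (σ ^ 2)⁻¹ • (1 : Matrix (Fin N) (Fin N) ℝ)) ∧
    HasDerivAt
      (fun t : ℝ =>
        Real.log (Matrix.det (L + t • Matrix.vecMulVec e e
            + (σ ^ 2)⁻¹ • (1 : Matrix (Fin N) (Fin N) ℝ)))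
          - (1 / (M : ℝ)) * Matrix.trace (Xᵀ * (L + t • Matrix.vecMulVec e e
            + (σ ^ 2)⁻¹ • (1 : Matrix (Fin N) (Fin N) ℝ)) * X))
      (e ⬝ᵥ (L + (σ ^ 2)⁻¹ • (1 : Matrix (Fin N) (Fin N) ℝ))⁻¹.mulVec e
        - (1 / (M : ℝ)) * ∑ j, (Xᵀ.mulVec e j) ^ 2)
      0 := by
  have hΘ₀ : (L + (σ ^ 2)⁻¹ • (1 : Matrix (Fin N) (Fin N) ℝ)).PosDef :=
    .posSemidef_add (.of_dotProduct_mulVec_nonneg (isHermitian_iff_isSymm.mpr hL) hpsd)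
      (PosDef.one.smul (by positivity))
  refine ⟨hΘ₀.isUnit, ?_⟩
  simp_rw [add_right_comm L (_ • vecMulVec e e)]
  have hlog := hasDerivAt_log_det_add_smul_vecMulVec hΘ₀.det_pos.ne' e e
  have htrace := (hasDerivAt_trace_mul_add_smul_mul Xᵀ
    (L + (σ ^ 2)⁻¹ • (1 : Matrix (Fin N) (Fin N) ℝ)) (vecMulVec e e) X 0).const_mul (1 / (M : ℝ))
  rw [trace_mul_vecMulVec_mul, ← mulVec_transpose] at htrace
  have hnorm : ∑ j, (Xᵀ *ᵥ e) j ^ 2 = (Xᵀ *ᵥ e) ⬝ᵥ (Xᵀ *ᵥ e) := by simp only [dotProduct, sq]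
  rw [hnorm]
  exact hlog.sub htrace

/-- **Edge-sensitivity of the graphical-Lasso objective.** For a real symmetric
positive semidefinite `L`, `σ > 0`, and `Θ(t) = L + t e eᵀ + σ⁻² I`, the matrix
`Θ(0)` is invertible and the function
`F(t) = log det Θ(t) − (1/M)·Tr(Xᵀ Θ(t) X)` has derivative
`eᵀ Θ(0)⁻¹ e − (1/M)·‖Xᵀ e‖₂²` at `t = 0`. -/
theorem edge_sensitivity_hasDerivAt {N M : ℕ} (hM : 1 ≤ M)
    (L : Matrix (Fin N) (Fin N) ℝ) (hL : L.IsSymm)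
    (hpsd : ∀ x : Fin N → ℝ, 0 ≤ x ⬝ᵥ L.mulVec x)
    (σ : ℝ) (hσ : 0 < σ) (e : Fin N → ℝ) (X : Matrix (Fin N) (Fin M) ℝ) :
    IsUnit (L + (σ ^ 2)⁻¹ • (1 : Matrix (Fin N) (Fin N) ℝ)) ∧
    HasDerivAt
      (fun t : ℝ =>
        Real.log (Matrix.det (L + t • Matrix.vecMulVec e e
            + (σ ^ 2)⁻¹ • (1 : Matrix (Fin N) (Fin N) ℝ)))
          - (1 / (M : ℝ)) * Matrix.trace (Xᵀ * (L + t • Matrix.vecMulVec e e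
            + (σ ^ 2)⁻¹ • (1 : Matrix (Fin N) (Fin N) ℝ)) * X))
      (e ⬝ᵥ (L + (σ ^ 2)⁻¹ • (1 : Matrix (Fin N) (Fin N) ℝ))⁻¹.mulVec e
        - (1 / (M : ℝ)) * ∑ j, (Xᵀ.mulVec e j) ^ 2)
      0 :=
  edge_sensitivity_hasDerivAt_general L hL hpsd σ hσ e X
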